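/- In any infinite word over a pushdown alphabet, there is at most one infinite maximal abstract path. -/

import Mathlib

/-- The type of a position in a word over a pushdown alphabet. -/
inductive SymType : Type
  | call | ret | int
deriving DecidableEq

/-- The factor strictly between `i` and `j` is well matched:
calls and returns balance out, and no prefix has more returns than calls. -/
def wellMatched (kind : ℕ → SymType) (i j : ℕ) : Prop :=
  (((Finset.Ioo i j).filter fun k => kind k = SymType.call).card =
   ((Finset.Ioo i j).filter fun k => kind k = SymType.ret).card) ∧
  ∀ m ∈ Finset.Ioo i j,
    ((Finset.Ioc i m).filter fun k => kind k = SymType.ret).card ≤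
    ((Finset.Ioc i m).filter fun k => kind k = SymType.call).card

/-- `j` is the matching return of the call `i`: the least return `j > i`
such that the factor strictly between `i` and `j` is well matched. -/
def MatchRet (kind : ℕ → SymType) (i j : ℕ) : Prop :=
  kind i = SymType.call ∧ i < j ∧ kind j = SymType.ret ∧ wellMatched kind i j ∧
  ∀ j', i < j' → j' < j → ¬ (kind j' = SymType.ret ∧ wellMatched kind i j')

/-- The abstract successor relation: a matched call maps to its matching
return; any non-call position maps to the next position provided it is not
a return. Unmatched calls (and positions followed by a return) have no
abstract successor. -/
def absSucc (kind : ℕ → SymType) (i j : ℕ) : Prop :=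
  (kind i = SymType.call ∧ MatchRet kind i j) ∨
  (kind i ≠ SymType.call ∧ j = i + 1 ∧ kind (i + 1) ≠ SymType.ret)

/-- `j` is reachable from `i` along abstract successors. -/
def reach (kind : ℕ → SymType) : ℕ → ℕ → Prop := Relation.ReflTransGen (absSucc kind)

/-- `i` and `j` lie on the same maximal abstract path (MAP). -/
def onSameMAP (kind : ℕ → SymType) (i j : ℕ) : Prop := reach kind i j ∨ reach kind j i

/-- `s` is the initial position of a MAP: nothing maps to it. -/
def isMAPStart (kind : ℕ → SymType) (s : ℕ) : Prop := ∀ k, ¬ absSucc kind k s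

/-- `s` is the initial position of the MAP visiting `i`. -/
def startsMAPOf (kind : ℕ → SymType) (s i : ℕ) : Prop := isMAPStart kind s ∧ reach kind s i

/-- The MAP visiting `i` is infinite (has no last position). -/
def infMAP (kind : ℕ → SymType) (i : ℕ) : Prop := ∀ j, reach kind i j → ∃ k, absSucc kind j k

/-- `p_∞` holds at `i` iff the MAP visiting `i` does not start at a position
`s > 0` such that `s - 1` is a call having a matching return. -/
def pInf (kind : ℕ → SymType) (i : ℕ) : Prop :=
  ¬ ∃ s, startsMAPOf kind s i ∧ 0 < s ∧ kind (s - 1) = SymType.call ∧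
    ∃ r, MatchRet kind (s - 1) r

/-!
Abstract successors strictly increase positions, so the MAP through `i` and the MAP through
`j > i` must meet unless the former jumps over `j`. Such a jump goes from a call `a` to its
matching return `b`, with `a < j < b`. But a well-matched factor nests: every call inside it has
its matching return inside it, and every non-call inside it steps to its right neighbour, which is
not the return `b`. Hence the MAP through `j` stays below `b` forever and cannot be infinite.
-/

def SymType.weight : SymType → ℤ
  | call => 1
  | ret => -1
  | int => 0

/-- Number of pending calls opened in the factor `(i, n]`; negative if returns dominate. -/
def depth (kind : ℕ → SymType) (i n : ℕ) : ℤ :=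
  ∑ k ∈ Finset.Ioc i n, (kind k).weight

section

variable {kind : ℕ → SymType}

lemma sum_weight_eq_card_sub_card (s : Finset ℕ) :
    ∑ k ∈ s, (kind k).weight =
      ((s.filter fun k => kind k = SymType.call).card : ℤ) -
        (s.filter fun k => kind k = SymType.ret).card := by
  simp only [Finset.card_filter, Nat.cast_sum, Nat.cast_ite, Nat.cast_one, Nat.cast_zero,
    ← Finset.sum_sub_distrib]
  refine Finset.sum_congr rfl fun k _ => ?_
  cases kind k <;> rfl

lemma depth_eq_zero_of_le {i n : ℕ} (hni : n ≤ i) : depth kind i n = 0 := by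
  simp [depth, Finset.Ioc_eq_empty_of_le hni]

lemma depth_add {i m n : ℕ} (him : i ≤ m) (hmn : m ≤ n) :
    depth kind i m + depth kind m n = depth kind i n :=
  Finset.sum_Ioc_consecutive _ him hmn

lemma depth_succ {i n : ℕ} (hin : i ≤ n) :
    depth kind i (n + 1) = depth kind i n + (kind (n + 1)).weight :=
  Finset.sum_Ioc_succ_top hin _

lemma wellMatched_iff {i j : ℕ} :
    wellMatched kind i j ↔ depth kind i (j - 1) = 0 ∧ ∀ n < j, 0 ≤ depth kind i n := by
  have hIoo : Finset.Ioo i j = Finset.Ioc i (j - 1) := by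
    ext k; simp only [Finset.mem_Ioo, Finset.mem_Ioc]; omega
  simp only [wellMatched, depth, sum_weight_eq_card_sub_card, hIoo, Finset.mem_Ioc, sub_eq_zero,
    sub_nonneg, Nat.cast_inj, Nat.cast_le]
  refine and_congr_right fun _ => ⟨fun h n hnj => ?_, fun h n hn => h n (by omega)⟩
  rcases le_or_gt n i with hni | hin
  · simp [Finset.Ioc_eq_empty_of_le hni]
  · exact h n ⟨hin, by omega⟩

lemma exists_wellMatched_ret_of_depth_neg {m e : ℕ} (he : depth kind m e < 0) :
    ∃ r, m < r ∧ r ≤ e ∧ kind r = SymType.ret ∧ wellMatched kind m r := by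
  classical
  have hme : m < e := not_le.mp fun h => (depth_eq_zero_of_le h).not_lt he
  have hneg : ∃ r, m < r ∧ depth kind m r < 0 := ⟨e, hme, he⟩
  set r := Nat.find hneg
  obtain ⟨hmr, hr⟩ : m < r ∧ depth kind m r < 0 := Nat.find_spec hneg
  have hbefore : ∀ n < r, 0 ≤ depth kind m n := fun n hnr => by
    rcases le_or_gt n m with hnm | hmn
    · exact (depth_eq_zero_of_le hnm).ge
    · exact not_lt.mp fun h => Nat.find_min hneg hnr ⟨hmn, h⟩
  obtain ⟨s, hs⟩ : ∃ s, r = s + 1 := ⟨r - 1, by omega⟩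
  have hstep : depth kind m r = depth kind m s + (kind r).weight := hs ▸ depth_succ (by omega)
  have hs_nonneg := hbefore s (by omega)
  have hr_ret : kind r = SymType.ret := by
    cases h : kind r <;> simp only [h, SymType.weight] at hstep <;> first | rfl | omega
  rw [hr_ret] at hstep
  refine ⟨r, hmr, Nat.find_min' hneg ⟨hme, he⟩, hr_ret,
    wellMatched_iff.mpr ⟨?_, hbefore⟩⟩
  rw [show r - 1 = s by omega]
  simp only [SymType.weight] at hstep
  omega

lemma wellMatched.exists_inner_return {a b m : ℕ} (hw : wellMatched kind a b) (ham : a < m)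
    (hmb : m < b) (hm : kind m = SymType.call) :
    ∃ r, m < r ∧ r < b ∧ kind r = SymType.ret ∧ wellMatched kind m r := by
  obtain ⟨hab, hnonneg⟩ := wellMatched_iff.mp hw
  have ham_pos : 1 ≤ depth kind a m := by
    obtain ⟨n, rfl⟩ : ∃ n, m = n + 1 := ⟨m - 1, by omega⟩
    rw [depth_succ (by omega), hm]
    linarith [hnonneg n (by omega), show SymType.call.weight = 1 from rfl]
  have hend : depth kind m (b - 1) < 0 := by
    linarith [depth_add (kind := kind) ham.le (show m ≤ b - 1 by omega)]
  obtain ⟨r, hmr, hrb, hr, hwr⟩ := exists_wellMatched_ret_of_depth_neg hend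
  exact ⟨r, hmr, by omega, hr, hwr⟩

lemma absSucc.lt {i j : ℕ} (h : absSucc kind i j) : i < j := by
  rcases h with ⟨-, -, hij, -⟩ | ⟨-, rfl, -⟩ <;> omega

lemma reach.le {i j : ℕ} (h : reach kind i j) : i ≤ j := by
  induction h with
  | refl => exact le_rfl
  | tail _ hstep ih => exact ih.trans hstep.lt.le

lemma infMAP.of_reach {i j : ℕ} (h : infMAP kind i) (hij : reach kind i j) : infMAP kind j :=
  fun k hjk => h k (hij.trans hjk)

lemma infMAP.exists_reach_ge {i : ℕ} (h : infMAP kind i) (N : ℕ) :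
    ∃ j, reach kind i j ∧ N ≤ j := by
  induction N with
  | zero => exact ⟨i, .refl, Nat.zero_le _⟩
  | succ N ih =>
    obtain ⟨j, hij, hNj⟩ := ih
    obtain ⟨k, hjk⟩ := h j hij
    exact ⟨k, hij.tail hjk, by have := hjk.lt; omega⟩

lemma MatchRet.absSucc_lt {a b m m' : ℕ} (hab : MatchRet kind a b) (ham : a < m) (hmb : m < b)
    (hstep : absSucc kind m m') : m' < b := by
  obtain ⟨-, -, hb, hw, -⟩ := hab
  rcases hstep with ⟨hm, -, -, -, -, hmin⟩ | ⟨-, rfl, hnext⟩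
  · by_contra! hbm'
    obtain ⟨r, hmr, hrb, hr, hwr⟩ := hw.exists_inner_return ham hmb hm
    exact hmin r hmr (hrb.trans_le hbm') ⟨hr, hwr⟩
  · rcases (Nat.succ_le_of_lt hmb).eq_or_lt with rfl | h
    · exact absurd hb hnext
    · exact h

lemma MatchRet.reach_lt {a b p m : ℕ} (hab : MatchRet kind a b) (hap : a < p) (hpb : p < b)
    (hpm : reach kind p m) : m < b := by
  induction hpm with
  | refl => exact hpb
  | tail hpm hstep ih => exact hab.absSucc_lt (hap.trans_le (reach.le hpm)) ih hstep

lemma MatchRet.not_infMAP {a b p : ℕ} (hab : MatchRet kind a b) (hap : a < p) (hpb : p < b) :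
    ¬ infMAP kind p := fun hp => by
  obtain ⟨m, hpm, hbm⟩ := hp.exists_reach_ge b
  exact (hab.reach_lt hap hpb hpm).not_ge hbm

lemma reach_of_infMAP_of_le {i j : ℕ} (hi : infMAP kind i) (hj : infMAP kind j) (hij : i ≤ j) :
    reach kind i j := by
  rcases hij.eq_or_lt with rfl | hlt
  · exact .refl
  obtain ⟨i', hii'⟩ := hi i .refl
  have hi'j : i' ≤ j := by
    by_contra! hji'
    rcases hii' with ⟨-, hmatch⟩ | ⟨-, rfl, -⟩
    · exact hmatch.not_infMAP hlt hji' hj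
    · omega
  exact .head hii' (reach_of_infMAP_of_le (hi.of_reach (.single hii')) hj hi'j)
termination_by j - i
decreasing_by have := hii'.lt; omega

end

/-- there is at most one infinite MAP. -/
theorem infinite_MAP_unique (kind : ℕ → SymType) (i j : ℕ)
    (hi : infMAP kind i) (hj : infMAP kind j) : onSameMAP kind i j := by
  rcases le_total i j with h | h
  · exact .inl (reach_of_infMAP_of_le hi hj h)
  · exact .inr (reach_of_infMAP_of_le hj hi h)
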